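/- arXiv:2507.09373 — 2 statements merged into one kernel-verified Lean document; each statement's English description precedes it below -/
import Mathlib

section
/- There exists a regular language L_A ⊆ Σ* such that, setting L' = L_A ∩ L_Z(ω): (a) L_R(ω) ⊆ L'; and (b) every word w ∈ L' \ L_R(ω) admits a factorization w = w₁ u w₂ v w₃ such that (1) φ(u) is stable, ω(u) > 0, and the weight of every prefix of w₁u is nonnegative, and (2) φ(v) is stable, ω(v) < 0, and the weight of every suffix of v w₃ is nonpositive. -/
/-- A matrix `M` is *stable* if `rank M = rank M²`. -/
def MatStable {d : ℕ} (M : Matrix (Fin d) (Fin d) ℚ) : Prop :=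
  M.rank = (M * M).rank

/-- The coverability language of `ω`: words all of whose prefixes have nonnegative
weight. -/
def coverLang {α : Type*} (ω : List α → ℤ) : Set (List α) :=
  {w | ∀ u : List α, u <+: w → 0 ≤ ω u}

/-- The reachability language of `ω`: words of weight zero all of whose prefixes have
nonnegative weight. -/
def reachLang {α : Type*} (ω : List α → ℤ) : Set (List α) :=
  {w | ω w = 0 ∧ ∀ u : List α, u <+: w → 0 ≤ ω u}

/-- The zero-weight language of `ω`. -/
def zeroLang {α : Type*} (ω : List α → ℤ) : Set (List α) :=
  {w | ω w = 0}

/-!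
Take `N = (d ^ d + 2) ^ d` and let `L_A` consist of the words whose weight does not drop below
`0` before it has first reached `N`, and whose reversals satisfy the same for the weight
`u ↦ -ω u.reverse`; both conditions are checked by a counter automaton with states
`-1, …, N`. A word of weight zero in `L_A` but not in `L_R` does drop below `0`, so it first
climbs from `0` to `N`, passing every level `0, 1, …, N`, and symmetrically it ends by descending
from `N` to `0`. Among the `N` factors between consecutive levels some product is stable. For a
sequence of products of constant rank `r`, unstable factors `M(s, t)` give subspaces
`range M(s, m)` and `ker M(0, t)` forming a skew Bollobás set-pair system, which has at most
`d ^ r` members; cutting into `d ^ d + 2` blocks reduces the general case to constant rank, one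
rank at a time.
-/

open Module Submodule LinearMap

open scoped Matrix

section LinearAlgebra

variable {K V W : Type*} [Field K] [AddCommGroup V] [Module K V] [AddCommGroup W] [Module K W]

theorem finrank_map_add_finrank_ker_inf [FiniteDimensional K V] (f : V →ₗ[K] W)
    (p : Submodule K V) :
    finrank K (p.map f) + finrank K (ker f ⊓ p : Submodule K V) = finrank K p := by
  rw [← range_domRestrict, ← (f.domRestrict p).finrank_range_add_finrank_ker, ker_domRestrict,
    ← (comapSubtypeEquivOfLe (inf_le_right : ker f ⊓ p ≤ p)).finrank_eq, comap_inf,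
    comap_subtype_self, inf_top_eq]

theorem Module.Basis.span_range_coe {ι : Type*} {p : Submodule K V} (b : Basis ι K p) :
    span K (Set.range fun i => (b i : V)) = p := by
  rw [Set.range_comp' Subtype.val b, ← p.coe_subtype, span_image, b.span_eq, Submodule.map_top,
    range_subtype]

theorem linearIndependent_sumElim_coe_basis_iff {ι κ : Type*} {p q : Submodule K V}
    (b : Basis ι K p) (c : Basis κ K q) :
    LinearIndependent K (Sum.elim (fun i => (b i : V)) fun j => (c j : V)) ↔ Disjoint p q := by
  rw [linearIndependent_sum, Sum.elim_comp_inl, Sum.elim_comp_inr, b.span_range_coe,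
    c.span_range_coe]
  exact ⟨fun h => h.2.2, fun h => ⟨b.linearIndependent.map' p.subtype p.ker_subtype,
    c.linearIndependent.map' q.subtype q.ker_subtype, h⟩⟩

theorem linearIndependent_of_triangular {ι : Type*} [Fintype ι] [LinearOrder ι]
    (x : ι → V) (Φ : ι → Dual K V) (hdiag : ∀ i, Φ i (x i) ≠ 0)
    (hoff : ∀ i j, i < j → Φ j (x i) = 0) : LinearIndependent K x := by
  classical
  let B : Matrix ι ι K := Matrix.of fun i j => Φ j (x i)
  have hB : B.IsLowerTriangular := fun i j hij => hoff i j hij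
  have hdet : IsUnit B.det := by
    rw [Matrix.det_of_isLowerTriangular B hB, isUnit_iff_ne_zero]
    exact Finset.prod_ne_zero_iff.2 fun i _ => hdiag i
  exact .of_comp (LinearMap.pi Φ)
    (Matrix.linearIndependent_rows_iff_isUnit.2 ((Matrix.isUnit_iff_isUnit_det B).2 hdet))

end LinearAlgebra

section SetPairs

variable {K ι : Type*} [Field K] [Fintype ι] {r s : ℕ}

theorem det_of_sumElim_ne_zero_iff [DecidableEq ι] (e : Fin r ⊕ Fin s ≃ ι) (C : Fin r → ι → K)
    (E : Fin s → ι → K) :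
    (Matrix.of fun q => Sum.elim C E (e.symm q)).det ≠ 0 ↔
      LinearIndependent K (Sum.elim C E) := by
  rw [← isUnit_iff_ne_zero, ← Matrix.isUnit_iff_isUnit_det,
    ← Matrix.linearIndependent_rows_iff_isUnit, ← linearIndependent_equiv e.symm]
  rfl

theorem exists_dual_apply_prod_eq_det [DecidableEq ι] (e : Fin r ⊕ Fin s ≃ ι)
    (E : Fin s → ι → K) :
    ∃ Φ : Dual K ((Fin r → ι) → K), ∀ C : Fin r → ι → K,
      Φ (fun g => ∏ k, C k (g k)) = (Matrix.of fun q => Sum.elim C E (e.symm q)).det := by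
  refine ⟨∑ σ : Equiv.Perm ι, ((Equiv.Perm.sign σ : ℤ) * ∏ k, E k (σ (e (.inr k))) : K) •
    LinearMap.proj (R := K) (φ := fun _ : Fin r → ι => K) fun k => σ (e (.inl k)), fun C => ?_⟩
  rw [← Matrix.det_transpose, Matrix.det_apply', LinearMap.sum_apply]
  refine Finset.sum_congr rfl fun σ _ => ?_
  rw [← e.prod_comp, Fintype.prod_sum_type]
  simp only [LinearMap.smul_apply, LinearMap.proj_apply, smul_eq_mul, Matrix.transpose_apply,
    Matrix.of_apply, Equiv.symm_apply_apply, Sum.elim_inl, Sum.elim_inr]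
  ring

/-- Lovász's proof of the skew Bollobás theorem, with the tensor power `(Fin r → ι) → K` in
place of the exterior power: `P i` is encoded by the tensor of a basis, `Q j` by the functional
`det [· | basis of Q j]`, and the resulting matrix is triangular. -/
theorem card_le_pow_of_skew_disjoint {κ : Type*} [Fintype κ] [LinearOrder κ]
    (hrs : r + s = Fintype.card ι) (P Q : κ → Submodule K (ι → K))
    (hP : ∀ i, finrank K (P i) = r) (hQ : ∀ i, finrank K (Q i) = s)
    (hdiag : ∀ i, Disjoint (P i) (Q i)) (hoff : ∀ i j, i < j → ¬ Disjoint (P i) (Q j)) :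
    Fintype.card κ ≤ Fintype.card ι ^ r := by
  classical
  let e : Fin r ⊕ Fin s ≃ ι :=
    finSumFinEquiv.trans ((finCongr hrs).trans (Fintype.equivFin ι).symm)
  let b i := finBasisOfFinrankEq K (P i) (hP i)
  let c j := finBasisOfFinrankEq K (Q j) (hQ j)
  choose Φ hΦ using fun j => exists_dual_apply_prod_eq_det (K := K) e fun k => (c j k : ι → K)
  let x i : (Fin r → ι) → K := fun g => ∏ k, (b i k : ι → K) (g k)
  have hx : ∀ i j, Φ j (x i) ≠ 0 ↔ Disjoint (P i) (Q j) := fun i j => by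
    rw [hΦ, det_of_sumElim_ne_zero_iff, linearIndependent_sumElim_coe_basis_iff]
  have hli := linearIndependent_of_triangular x Φ (fun i => (hx i i).2 (hdiag i))
    fun i j hij => not_not.1 fun h => hoff i j hij ((hx i j).1 h)
  simpa using hli.fintype_card_le_finrank

end SetPairs

namespace Matrix

variable {K l m n : Type*} [Field K] [Fintype m] [Fintype n]

theorem rank_mul_add_finrank_ker_inf_range (X : Matrix l m K) (Y : Matrix m n K) :
    (X * Y).rank + finrank K (ker X.mulVecLin ⊓ range Y.mulVecLin : Submodule K (m → K)) =
      Y.rank := by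
  rw [rank, mulVecLin_mul, range_comp]
  exact finrank_map_add_finrank_ker_inf _ _

theorem rank_mul_eq_right_iff_disjoint (X : Matrix l m K) (Y : Matrix m n K) :
    (X * Y).rank = Y.rank ↔ Disjoint (ker X.mulVecLin) (range Y.mulVecLin) := by
  rw [disjoint_iff, ← finrank_eq_zero]
  have := rank_mul_add_finrank_ker_inf_range X Y
  omega

theorem range_mulVecLin_mul_eq {X : Matrix l m K} {Y : Matrix m n K}
    (h : (X * Y).rank = X.rank) : range (X * Y).mulVecLin = range X.mulVecLin := by
  rw [rank, rank, mulVecLin_mul] at h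
  rw [mulVecLin_mul]
  exact eq_of_le_of_finrank_eq (range_comp_le_range _ _) h

theorem ker_mulVecLin_mul_eq {X : Matrix l m K} {Y : Matrix m n K}
    (h : (X * Y).rank = Y.rank) : ker (X * Y).mulVecLin = ker Y.mulVecLin := by
  have hXY := (X * Y).mulVecLin.finrank_range_add_finrank_ker
  have hY := Y.mulVecLin.finrank_range_add_finrank_ker
  rw [rank, rank] at h
  rw [mulVecLin_mul] at h hXY ⊢
  exact (eq_of_le_of_finrank_eq (ker_le_ker_comp _ _) (by omega)).symm

end Matrix

def IsIntervalMul {M : Type*} [Mul M] (n : ℕ) (A : ℕ → ℕ → M) : Prop :=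
  ∀ a b c, a ≤ b → b ≤ c → c ≤ n → A a c = A a b * A b c

theorem IsIntervalMul.comp {M : Type*} [Mul M] {n m : ℕ} {A : ℕ → ℕ → M}
    (hA : IsIntervalMul n A) {f : ℕ → ℕ} (hf : Monotone f) (hfm : f m ≤ n) :
    IsIntervalMul m fun a b => A (f a) (f b) :=
  fun _ _ _ hab hbc hcm => hA _ _ _ (hf hab) (hf hbc) ((hf hcm).trans hfm)

section Stability

variable {d : ℕ}

theorem matStable_iff_disjoint (B : Matrix (Fin d) (Fin d) ℚ) :
    MatStable B ↔ Disjoint (ker B.mulVecLin) (range B.mulVecLin) :=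
  eq_comm.trans (Matrix.rank_mul_eq_right_iff_disjoint B B)

theorem matStable_transpose_iff (B : Matrix (Fin d) (Fin d) ℚ) : MatStable Bᵀ ↔ MatStable B := by
  rw [MatStable, MatStable, ← Matrix.transpose_mul, Matrix.rank_transpose, Matrix.rank_transpose]

theorem matStable_of_le_rank {B : Matrix (Fin d) (Fin d) ℚ} (h : d ≤ B.rank) : MatStable B := by
  have := B.mulVecLin.finrank_range_add_finrank_ker
  rw [finrank_fin_fun] at this
  rw [Matrix.rank] at h
  rw [matStable_iff_disjoint, finrank_eq_zero.1 (by omega : finrank ℚ (ker B.mulVecLin) = 0)]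
  exact disjoint_bot_left

variable {n : ℕ} {A : ℕ → ℕ → Matrix (Fin d) (Fin d) ℚ}

theorem IsIntervalMul.rank_le (hA : IsIntervalMul n A) {a b c e : ℕ} (hab : a ≤ b) (hbc : b ≤ c)
    (hce : c ≤ e) (hen : e ≤ n) : (A a e).rank ≤ (A b c).rank := by
  rw [hA a b e hab (hbc.trans hce) hen, hA b c e hbc hce hen, ← mul_assoc]
  exact (Matrix.rank_mul_le_left _ _).trans (Matrix.rank_mul_le_right _ _)

/-- With all ranks equal, `A s t` is stable iff `range (A s m)` and `ker (A 0 t)` are disjoint;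
if no factor is stable these subspaces form a skew set-pair system. -/
theorem IsIntervalMul.exists_matStable_of_rank_eq {m r : ℕ} (hA : IsIntervalMul m A)
    (hm : d ^ r + 2 ≤ m) (hrank : ∀ a b, a < b → b ≤ m → (A a b).rank = r) :
    ∃ a b, a < b ∧ b ≤ m ∧ MatStable (A a b) := by
  by_contra! hno
  have hrd : r ≤ d := hrank 0 m (by omega) le_rfl ▸ (A 0 m).rank_le_width.trans (by simp)
  have hrange : ∀ s t, s < t → t ≤ m → range (A s t).mulVecLin = range (A s m).mulVecLin :=
    fun s t hst htm => by
      rw [hA s t m hst.le htm le_rfl, Matrix.range_mulVecLin_mul_eq (by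
        rw [← hA s t m hst.le htm le_rfl, hrank s t hst htm, hrank s m (by omega) le_rfl])]
  have hker : ∀ s t, 0 < s → s < t → t ≤ m →
      ker (A s t).mulVecLin = ker (A 0 t).mulVecLin := fun s t hs hst htm => by
    rw [hA 0 s t hs.le hst.le htm, Matrix.ker_mulVecLin_mul_eq (by
      rw [← hA 0 s t hs.le hst.le htm, hrank s t hst htm, hrank 0 t (by omega) htm])]
  have hdim : ∀ t, 0 < t → t ≤ m → finrank ℚ (ker (A 0 t).mulVecLin) = d - r :=
    fun t ht htm => by
      have := (A 0 t).mulVecLin.finrank_range_add_finrank_ker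
      rw [← Matrix.rank, hrank 0 t ht htm, finrank_fin_fun] at this
      omega
  have := card_le_pow_of_skew_disjoint (r := r) (s := d - r) (by simp; omega)
    (fun i : Fin (m - 1) => range (A (i + 1) m).mulVecLin)
    (fun j : Fin (m - 1) => ker (A 0 (j + 1)).mulVecLin)
    (fun i => hrank _ _ (by omega) le_rfl) (fun j => hdim _ (by omega) (by omega))
    (fun i => by
      rw [disjoint_comm, ← Matrix.rank_mul_eq_right_iff_disjoint, ← hA 0 _ m (by omega)
        (by omega) le_rfl, hrank _ _ (by omega) le_rfl, hrank _ _ (by omega) le_rfl])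
    (fun i j hij => by
      rw [disjoint_comm, ← hrange _ _ (by omega : (i : ℕ) + 1 < j + 1) (by omega),
        ← hker _ _ (by omega) (by omega : (i : ℕ) + 1 < j + 1) (by omega),
        ← matStable_iff_disjoint]
      exact hno _ _ (by omega) (by omega))
  simp only [Fintype.card_fin] at this
  omega

/-- Cut `[0, n]` into `d ^ d + 2` blocks of length `L`. If in some block all ranks are at least
`d - k`, recurse into it; otherwise every block contains a factor of rank below `d - k`, so all
products of consecutive blocks have rank exactly `d - (k + 1)`. -/
theorem IsIntervalMul.exists_matStable_of_le_rank_add (k : ℕ) (hA : IsIntervalMul n A)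
    (hn : (d ^ d + 2) ^ k ≤ n) (hrank : ∀ a b, a < b → b ≤ n → d ≤ (A a b).rank + k) :
    ∃ a b, a < b ∧ b ≤ n ∧ MatStable (A a b) := by
  induction k generalizing n A with
  | zero =>
    have h1 : 1 ≤ n := by simpa using hn
    exact ⟨0, 1, one_pos, h1, matStable_of_le_rank (hrank 0 1 one_pos h1)⟩
  | succ k ih =>
    set L := (d ^ d + 2) ^ k
    have hL : (d ^ d + 2) * L ≤ n := by rwa [← pow_succ']
    by_cases hblock :
        ∃ j < d ^ d + 2, ∀ a b, a < b → b ≤ L → d ≤ (A (j * L + a) (j * L + b)).rank + k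
    · obtain ⟨j, hj, hjrank⟩ := hblock
      have hjL : j * L + L ≤ n := (by nlinarith : j * L + L ≤ (d ^ d + 2) * L).trans hL
      obtain ⟨a, b, hab, hbL, hst⟩ :=
        ih (hA.comp (fun _ _ h => Nat.add_le_add_left h _) hjL) le_rfl hjrank
      exact ⟨j * L + a, j * L + b, by omega, by omega, hst⟩
    · push Not at hblock
      choose a b hab hbL hlow using hblock
      have hpow : d ^ (d - (k + 1)) ≤ d ^ d := by
        rcases d.eq_zero_or_pos with rfl | hd
        · simp
        · exact Nat.pow_le_pow_right hd (Nat.sub_le d _)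
      obtain ⟨i, j, hij, hj, hst⟩ :=
        (hA.comp (fun _ _ h => Nat.mul_le_mul_right L h) hL).exists_matStable_of_rank_eq
          (r := d - (k + 1)) (by omega) fun i j hij hj => by
        have hjL : j * L ≤ n := (Nat.mul_le_mul_right L hj).trans hL
        have hiL : i * L + L ≤ j * L := by nlinarith
        have hi : i < d ^ d + 2 := by omega
        have := hab i hi
        have := hbL i hi
        have hsub := hA.rank_le (a := i * L) (b := i * L + a i hi) (c := i * L + b i hi)
          (by omega) (by omega) (by omega) hjL
        have := hrank (i * L) (j * L) (by nlinarith) hjL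
        have := hlow i hi
        omega
      exact ⟨i * L, j * L, Nat.mul_lt_mul_of_pos_right hij (by positivity),
        (Nat.mul_le_mul_right L hj).trans hL, hst⟩

theorem IsIntervalMul.exists_matStable (hA : IsIntervalMul n A) (hn : (d ^ d + 2) ^ d ≤ n) :
    ∃ a b, a < b ∧ b ≤ n ∧ MatStable (A a b) :=
  hA.exists_matStable_of_le_rank_add d hn fun _ _ _ _ => Nat.le_add_left _ _

end Stability

section CoverUntil

variable {α : Type*} {ω : List α → ℤ} {N : ℕ}

def coverUntilLang (ω : List α → ℤ) (N : ℕ) (j : ℤ) : Language α :=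
  {w | ∀ i, j + ω (w.take i) < 0 → ∃ e < i, (N : ℤ) ≤ j + ω (w.take e)}

def coverUntilStep (ω : List α → ℤ) (N : ℕ) (j : ℤ) (a : α) : ℤ :=
  if 0 ≤ j ∧ j < N then j + ω [a] else j

theorem notMem_coverUntilLang (hω_nil : ω [] = 0) {j : ℤ} (hj : j < 0) (w : List α) :
    w ∉ coverUntilLang ω N j := fun hw => by
  obtain ⟨e, he, -⟩ := hw 0 (by simpa [hω_nil])
  omega

theorem mem_coverUntilLang_of_le (hω_nil : ω [] = 0) {j : ℤ} (hj : N ≤ j) (w : List α) :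
    w ∈ coverUntilLang ω N j := fun i hi =>
  ⟨0, Nat.pos_of_ne_zero (by rintro rfl; simp [hω_nil] at hi; omega), by simpa [hω_nil]⟩

theorem mem_coverUntilLang_of_mem_coverLang {w : List α} (hw : w ∈ coverLang ω) :
    w ∈ coverUntilLang ω N 0 :=
  fun i hi => absurd (hw _ (w.take_prefix i)) (by simpa using hi)

theorem nil_mem_coverUntilLang_iff (hω_nil : ω [] = 0) {j : ℤ} :
    [] ∈ coverUntilLang ω N j ↔ 0 ≤ j :=
  ⟨fun h => not_lt.1 fun hj => notMem_coverUntilLang hω_nil hj _ h,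
    fun hj i hi => by simp [hω_nil] at hi; omega⟩

theorem cons_mem_coverUntilLang_iff (hω_nil : ω [] = 0)
    (hω_app : ∀ u v, ω (u ++ v) = ω u + ω v) {j : ℤ} {a : α} {w : List α} :
    a :: w ∈ coverUntilLang ω N j ↔ w ∈ coverUntilLang ω N (coverUntilStep ω N j a) := by
  have hcons : ∀ l, ω (a :: l) = ω [a] + ω l := fun l => hω_app [a] l
  unfold coverUntilStep
  split_ifs with hj
  · constructor
    · intro hw i hi
      obtain ⟨_ | e, he, hNe⟩ := hw (i + 1) (by rw [List.take_succ_cons, hcons]; linarith)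
      · simp [hω_nil] at hNe
        omega
      · rw [List.take_succ_cons, hcons] at hNe
        exact ⟨e, by omega, by linarith⟩
    · rintro hw (_ | i) hi
      · simp [hω_nil] at hi
        omega
      · rw [List.take_succ_cons, hcons] at hi
        obtain ⟨e, he, hNe⟩ := hw i (by linarith)
        exact ⟨e + 1, by omega, by rw [List.take_succ_cons, hcons]; linarith⟩
  · rcases lt_or_ge j 0 with hj' | hj'
    · exact iff_of_false (notMem_coverUntilLang hω_nil hj' _) (notMem_coverUntilLang hω_nil hj' _)
    · exact iff_of_true (mem_coverUntilLang_of_le hω_nil (by omega) _)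
        (mem_coverUntilLang_of_le hω_nil (by omega) _)

theorem coverUntilLang_projIcc (hω_nil : ω [] = 0) (h : (-1 : ℤ) ≤ N) (j : ℤ) :
    coverUntilLang ω N (Set.projIcc (-1 : ℤ) N h j) = coverUntilLang ω N j := by
  ext w
  rcases le_or_gt j (-1) with hj | hj
  · rw [Set.projIcc_of_le_left h hj]
    exact iff_of_false (notMem_coverUntilLang hω_nil (by simp) _)
      (notMem_coverUntilLang hω_nil (by omega) _)
  rcases le_or_gt (N : ℤ) j with hj' | hj'
  · rw [Set.projIcc_of_right_le h hj']
    exact iff_of_true (mem_coverUntilLang_of_le hω_nil le_rfl _)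
      (mem_coverUntilLang_of_le hω_nil hj' _)
  · rw [Set.projIcc_of_mem h ⟨hj.le, hj'.le⟩]

/-- The state is the counter value clamped to `[-1, N]`: the offsets `-1` and `N` stand for
"rejected for good" and "accepted for good". -/
noncomputable def coverUntilDFA (ω : List α → ℤ) (N : ℕ) : DFA α (Set.Icc (-1 : ℤ) N) where
  step s a := Set.projIcc (-1 : ℤ) N (by omega) (coverUntilStep ω N s a)
  start := ⟨0, by simp⟩
  accept := {s | 0 ≤ (s : ℤ)}

theorem coverUntilDFA_evalFrom_mem_accept_iff (hω_nil : ω [] = 0)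
    (hω_app : ∀ u v, ω (u ++ v) = ω u + ω v) (w : List α) (s : Set.Icc (-1 : ℤ) N) :
    (coverUntilDFA ω N).evalFrom s w ∈ (coverUntilDFA ω N).accept ↔
      w ∈ coverUntilLang ω N s := by
  induction w generalizing s with
  | nil => exact (nil_mem_coverUntilLang_iff hω_nil).symm
  | cons a w ih =>
    rw [DFA.evalFrom_cons, ih, cons_mem_coverUntilLang_iff hω_nil hω_app]
    exact Eq.to_iff (congrArg (w ∈ ·) (coverUntilLang_projIcc hω_nil (by omega) _))

theorem isRegular_coverUntilLang (hω_nil : ω [] = 0) (hω_app : ∀ u v, ω (u ++ v) = ω u + ω v) :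
    (coverUntilLang ω N 0).IsRegular :=
  ⟨_, inferInstance, coverUntilDFA ω N,
    Set.ext fun w => coverUntilDFA_evalFrom_mem_accept_iff hω_nil hω_app w _⟩

end CoverUntil

theorem List.take_append_extract {α : Type*} (l : List α) {i j : ℕ} (h : i ≤ j) :
    l.take i ++ l.extract i j = l.take j := by
  rw [List.extract_eq_take_drop, ← List.take_add, Nat.add_sub_cancel' h]

theorem List.extract_append_extract {α : Type*} (l : List α) {i j k : ℕ} (hij : i ≤ j)
    (hjk : j ≤ k) : l.extract i j ++ l.extract j k = l.extract i k := by
  apply List.append_cancel_left (as := l.take i)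
  rw [← List.append_assoc, l.take_append_extract hij, l.take_append_extract hjk,
    l.take_append_extract (hij.trans hjk)]

/-- `p l` is the first time `g` reaches `min l N`. -/
theorem exists_monotone_levels (g : ℕ → ℤ) (h0 : g 0 = 0) (hstep : ∀ i, g (i + 1) ≤ g i + 1)
    {N e : ℕ} (he : (N : ℤ) ≤ g e) :
    ∃ p : ℕ → ℕ, Monotone p ∧ (∀ l ≤ N, g (p l) = l) ∧ ∀ i < p N, g i < N := by
  classical
  have hex : ∀ l : ℕ, ∃ i, (min l N : ℕ) ≤ g i := fun l => ⟨e, by omega⟩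
  refine ⟨fun l => Nat.find (hex l), fun l l' h => Nat.find_mono fun i hi => ?_, fun l hl => ?_,
    fun i hi => by simpa using Nat.find_min (hex N) hi⟩
  · exact le_trans (by gcongr) hi
  · have hspec := Nat.find_spec (hex l)
    show g (Nat.find (hex l)) = l
    rcases hfind : Nat.find (hex l) with _ | i
    · rw [hfind, h0] at hspec
      rw [h0]
      omega
    · have hmin := Nat.find_min (hex l) (m := i) (by omega)
      rw [hfind] at hspec
      have := hstep i
      push_cast at hmin
      omega

section Words

variable {α : Type*} {d : ℕ} (φ : List α → Matrix (Fin d) (Fin d) ℚ) {ω : List α → ℤ}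

theorem weight_take_add_one_le (hω_nil : ω [] = 0) (hω_app : ∀ u v, ω (u ++ v) = ω u + ω v)
    (hω_le : ∀ a, ω [a] ≤ 1) (w : List α) (i : ℕ) :
    ω (w.take (i + 1)) ≤ ω (w.take i) + 1 := by
  rw [List.take_add_one, hω_app]
  cases w[i]? with
  | none => simp [hω_nil]
  | some a => simpa using hω_le a

theorem isIntervalMul_extract (hφ : ∀ u v, φ (u ++ v) = φ u * φ v) (w : List α) (n : ℕ) :
    IsIntervalMul n fun i j => φ (w.extract i j) :=
  fun _ _ _ hab hbc _ => by rw [← hφ, w.extract_append_extract hab hbc]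

theorem exists_matStable_ascent (hφ : ∀ u v, φ (u ++ v) = φ u * φ v) (hω_nil : ω [] = 0)
    (hω_app : ∀ u v, ω (u ++ v) = ω u + ω v) (hω_le : ∀ a, ω [a] ≤ 1) {w : List α}
    (hw : w ∈ coverUntilLang ω ((d ^ d + 2) ^ d) 0) (hdip : w ∉ coverLang ω) :
    ∃ w₁ u, w₁ ++ u <+: w ∧ MatStable (φ u) ∧ 0 < ω u ∧ ∀ p, p <+: w₁ ++ u → 0 ≤ ω p := by
  set N := (d ^ d + 2) ^ d
  obtain ⟨q, hq⟩ : ∃ q, ω (w.take q) < 0 := by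
    simp only [coverLang, Set.mem_ofPred_eq, not_forall, not_le] at hdip
    obtain ⟨u, hu, hneg⟩ := hdip
    exact ⟨u.length, List.prefix_iff_eq_take.1 hu ▸ hneg⟩
  obtain ⟨e, -, he⟩ := hw q (by simpa using hq)
  obtain ⟨p, hp, hpval, hpfirst⟩ := exists_monotone_levels (fun i => ω (w.take i))
    (by simpa using hω_nil) (weight_take_add_one_le hω_nil hω_app hω_le w) (by simpa using he)
  have hnonneg : ∀ i ≤ p N, 0 ≤ ω (w.take i) := fun i hi => by
    by_contra! hneg
    obtain ⟨e', he'i, he'⟩ := hw i (by simpa using hneg)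
    have := hpfirst e' (by omega)
    simp only [zero_add] at he' this
    omega
  obtain ⟨a, b, hab, hbN, hstab⟩ :=
    ((isIntervalMul_extract φ hφ w (p N)).comp hp le_rfl).exists_matStable le_rfl
  refine ⟨w.take (p a), w.extract (p a) (p b), ?_, hstab, ?_, fun x hx => ?_⟩
  · rw [w.take_append_extract (hp hab.le)]
    exact w.take_prefix _
  · have hsplit := hω_app (w.take (p a)) (w.extract (p a) (p b))
    rw [w.take_append_extract (hp hab.le), hpval b hbN, hpval a (by omega)] at hsplit
    omega
  · rw [w.take_append_extract (hp hab.le)] at hx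
    rw [List.prefix_iff_eq_take.1 hx, List.take_take]
    exact hnonneg _ ((min_le_right _ _).trans (hp hbN))

def dualWeight (ω : List α → ℤ) (u : List α) : ℤ :=
  -ω u.reverse

theorem dualWeight_append (hω_app : ∀ u v, ω (u ++ v) = ω u + ω v) (u v : List α) :
    dualWeight ω (u ++ v) = dualWeight ω u + dualWeight ω v := by
  simp only [dualWeight, List.reverse_append, hω_app]
  ring

theorem reverse_mem_coverLang_dualWeight_iff (hω_app : ∀ u v, ω (u ++ v) = ω u + ω v)
    {w : List α} (hw : ω w = 0) : w.reverse ∈ coverLang (dualWeight ω) ↔ w ∈ coverLang ω := by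
  simp only [coverLang, Set.mem_ofPred_eq, dualWeight]
  constructor
  · rintro h u ⟨r, rfl⟩
    have := h r.reverse (List.reverse_prefix.2 (List.suffix_append u r))
    rw [List.reverse_reverse] at this
    have := hω_app u r
    omega
  · rintro h t ⟨r, hr⟩
    have hw' : r.reverse ++ t.reverse = w := by
      rw [← List.reverse_append, hr, List.reverse_reverse]
    have := h r.reverse ⟨t.reverse, hw'⟩
    have := hω_app r.reverse t.reverse
    rw [hw'] at this
    omega

/-- The ascent of the reversed word for `dualWeight ω` and the morphism `u ↦ (φ u.reverse)ᵀ`. -/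
theorem exists_matStable_descent (hφ : ∀ u v, φ (u ++ v) = φ u * φ v) (hω_nil : ω [] = 0)
    (hω_app : ∀ u v, ω (u ++ v) = ω u + ω v) (hω_ge : ∀ a, -1 ≤ ω [a]) {w : List α}
    (hw : w.reverse ∈ coverUntilLang (dualWeight ω) ((d ^ d + 2) ^ d) 0)
    (hdip : w.reverse ∉ coverLang (dualWeight ω)) :
    ∃ v w₃, v ++ w₃ <:+ w ∧ MatStable (φ v) ∧ ω v < 0 ∧ ∀ s, s <:+ v ++ w₃ → ω s ≤ 0 := by
  obtain ⟨y, v, hpre, hstab, hpos, hnonneg⟩ :=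
    exists_matStable_ascent (fun u => (φ u.reverse)ᵀ)
      (fun u v => by simp [hφ, Matrix.transpose_mul]) (by simp [dualWeight, hω_nil])
      (dualWeight_append hω_app) (fun a => by simp [dualWeight]; linarith [hω_ge a]) hw hdip
  refine ⟨v.reverse, y.reverse, ?_, (matStable_transpose_iff _).1 hstab, ?_, fun s hs => ?_⟩
  · rwa [← List.reverse_append, ← List.reverse_prefix, List.reverse_reverse]
  · simpa [dualWeight] using hpos
  · have := hnonneg s.reverse (by
      rwa [← List.reverse_suffix, List.reverse_reverse, List.reverse_append])
    simpa [dualWeight] using this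

theorem exists_eq_append_append_of_notMem_coverLang (hω_app : ∀ u v, ω (u ++ v) = ω u + ω v)
    {w A B : List α} (hw : ω w = 0) (hdip : w ∉ coverLang ω) (hA : A <+: w)
    (hA' : ∀ p, p <+: A → 0 ≤ ω p) (hB : B <:+ w) (hB' : ∀ s, s <:+ B → ω s ≤ 0) :
    ∃ m, w = A ++ m ++ B := by
  simp only [coverLang, Set.mem_ofPred_eq, not_forall, not_le] at hdip
  obtain ⟨q, ⟨r, rfl⟩, hq⟩ := hdip
  have hr : 0 < ω r := by
    have := hω_app q r
    omega
  obtain ⟨m₁, rfl⟩ := (List.prefix_or_prefix_of_prefix hA (List.prefix_append q r)).resolve_right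
    fun h => (hA' q h).not_gt hq
  obtain ⟨m₂, rfl⟩ := (List.suffix_or_suffix_of_suffix hB (List.suffix_append _ r)).resolve_right
    fun h => (hB' r h).not_gt hr
  exact ⟨m₁ ++ m₂, by simp⟩

end Words

theorem reach_regular_approximation_general {α : Type*} (d : ℕ)
    (φ : List α → Matrix (Fin d) (Fin d) ℚ)
    (hφ_app : ∀ u v : List α, φ (u ++ v) = φ u * φ v)
    (ω : List α → ℤ)
    (hω_nil : ω [] = 0) (hω_app : ∀ u v : List α, ω (u ++ v) = ω u + ω v)
    (hω_letter : ∀ σ : α, ω [σ] = -1 ∨ ω [σ] = 0 ∨ ω [σ] = 1) :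
    ∃ LA : Set (List α), Language.IsRegular (LA : Language α) ∧
      reachLang ω ⊆ LA ∩ zeroLang ω ∧
      ∀ w ∈ (LA ∩ zeroLang ω) \ reachLang ω,
        ∃ w₁ u w₂ v w₃ : List α, w = w₁ ++ u ++ w₂ ++ v ++ w₃ ∧
          (MatStable (φ u) ∧ 0 < ω u ∧ ∀ p : List α, p <+: (w₁ ++ u) → 0 ≤ ω p) ∧
          (MatStable (φ v) ∧ ω v < 0 ∧ ∀ s : List α, s <:+ (v ++ w₃) → ω s ≤ 0) := by
  set N := (d ^ d + 2) ^ d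
  refine ⟨coverUntilLang ω N 0 ⊓ (coverUntilLang (dualWeight ω) N 0).reverse,
    (isRegular_coverUntilLang hω_nil hω_app).inf (isRegular_coverUntilLang
      (by simp [dualWeight, hω_nil]) (dualWeight_append hω_app)).reverse, ?_, ?_⟩
  · rintro w ⟨hw0, hcov⟩
    exact ⟨⟨mem_coverUntilLang_of_mem_coverLang hcov, mem_coverUntilLang_of_mem_coverLang
      ((reverse_mem_coverLang_dualWeight_iff hω_app hw0).2 hcov)⟩, hw0⟩
  · rintro w ⟨⟨⟨hwL, hwR⟩, hw0⟩, hnr⟩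
    have hdip : w ∉ coverLang ω := fun h => hnr ⟨hw0, h⟩
    obtain ⟨w₁, u, hpre, hu⟩ := exists_matStable_ascent φ hφ_app hω_nil hω_app
      (fun a => by rcases hω_letter a with h | h | h <;> omega) hwL hdip
    obtain ⟨v, w₃, hsuf, hv⟩ := exists_matStable_descent φ hφ_app hω_nil hω_app
      (fun a => by rcases hω_letter a with h | h | h <;> omega) hwR
      (mt (reverse_mem_coverLang_dualWeight_iff hω_app hw0).1 hdip)
    obtain ⟨w₂, rfl⟩ := exists_eq_append_append_of_notMem_coverLang hω_app hw0 hdip hpre hu.2.2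
      hsuf hv.2.2
    exact ⟨w₁, u, w₂, v, w₃, by simp, hu, hv⟩

/-- For monoid morphisms `φ : Σ* → M_d(ℚ)` and `ω : Σ* → ℤ` (with letter weights in
`{-1,0,1}`), there is a regular language `L_A` such that, setting
`L' = L_A ∩ L_Z(ω)`, we have `L_R(ω) ⊆ L'` and every word `w ∈ L' \ L_R(ω)` factors as
`w = w₁ u w₂ v w₃` where `φ(u)` is stable, `ω(u) > 0`, every prefix of `w₁u` has
nonnegative weight, `φ(v)` is stable, `ω(v) < 0`, and every suffix of `v w₃` has
nonpositive weight. -/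
theorem reach_regular_approximation {α : Type*} [Fintype α] (d : ℕ)
    (φ : List α → Matrix (Fin d) (Fin d) ℚ)
    (hφ_nil : φ [] = 1) (hφ_app : ∀ u v : List α, φ (u ++ v) = φ u * φ v)
    (ω : List α → ℤ)
    (hω_nil : ω [] = 0) (hω_app : ∀ u v : List α, ω (u ++ v) = ω u + ω v)
    (hω_letter : ∀ σ : α, ω [σ] = -1 ∨ ω [σ] = 0 ∨ ω [σ] = 1) :
    ∃ LA : Set (List α), Language.IsRegular (LA : Language α) ∧
      reachLang ω ⊆ LA ∩ zeroLang ω ∧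
      ∀ w ∈ (LA ∩ zeroLang ω) \ reachLang ω,
        ∃ w₁ u w₂ v w₃ : List α, w = w₁ ++ u ++ w₂ ++ v ++ w₃ ∧
          (MatStable (φ u) ∧ 0 < ω u ∧ ∀ p : List α, p <+: (w₁ ++ u) → 0 ≤ ω p) ∧
          (MatStable (φ v) ∧ ω v < 0 ∧ ∀ s : List α, s <:+ (v ++ w₃) → ω s ≤ 0) :=
  reach_regular_approximation_general d φ hφ_app ω hω_nil hω_app hω_letter
end

section
/- Let L' ⊆ L_Z(ω) be any language such that: (a) L_R(ω) ⊆ L'; and (b) every word w ∈ L' \ L_R(ω) admits a factorization w = w₁ u w₂ v w₃ such that (1) φ(u) is stable, ω(u) > 0, and the weight of every prefix of w₁u is nonnegative, and (2) φ(v) is stable, ω(v) < 0, and the weight of every suffix of v w₃ is nonpositive. Then the Zariski closure of φ(L_R(ω)) in M_d(ℚ̄) equals the Zariski closure of φ(L'). -/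
noncomputable section

/-- The algebraic closure of `ℚ`. -/
abbrev Qbar : Type := AlgebraicClosure ℚ

/-- View a rational matrix inside `M_d(ℚ̄)`. -/
def liftMat {d : ℕ} (M : Matrix (Fin d) (Fin d) ℚ) : Matrix (Fin d) (Fin d) Qbar :=
  M.map (algebraMap ℚ Qbar)

/-- The Zariski closure of a set of `d × d` matrices over `ℚ̄`, identified with affine
space `ℚ̄^(d²)`: the common zero set of all polynomials vanishing on the set. -/
def matZClosure (d : ℕ) (S : Set (Matrix (Fin d) (Fin d) Qbar)) :
    Set (Matrix (Fin d) (Fin d) Qbar) :=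
  {A | ∀ p : MvPolynomial (Fin d × Fin d) Qbar,
      (∀ B ∈ S, MvPolynomial.eval (fun ij => B ij.1 ij.2) p = 0) →
      MvPolynomial.eval (fun ij => A ij.1 ij.2) p = 0}

/-! Every word `w = w₁ u w₂ v w₃` of `L'` outside `L_R(ω)` is the `k = 0` member of the family
`w₁ u^(ak+1) w₂ v^(bk+1) w₃` with `a = -ω(v)`, `b = ω(u)`. These words all have weight `0`, and
for large `k` they lie in `L_R(ω)`: the long `u`-block dominates the prefixes ending in `w₂`,
and every later prefix is the complement of a suffix of `v^(bk+1) w₃`, which weighs `≤ 0`.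

If `N = φ(u)` is stable then `N² C = N` for some `C`, so `N^(a+1) C^a = N` and the shift acts
invertibly on the span of the sequences `k ↦ (N^(ak+1) Q)ᵢⱼ`. Sequences lying in such a
finite-dimensional shift-invertible space form an algebra, and a member vanishing for all large
`k` vanishes identically. Hence a polynomial vanishing on `φ(L_R(ω))` vanishes along the family,
in particular at `k = 0`, that is at `φ(w)`. -/

open Filter

section Words

variable {α : Type*}

theorem List.prefix_or_eq_append_of_prefix_append {p x y : List α} (h : p <+: x ++ y) :
    p <+: x ∨ ∃ q, q <+: y ∧ p = x ++ q := by
  obtain ⟨t, ht⟩ := h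
  rcases List.append_eq_append_iff.1 ht with ⟨r, hr, _⟩ | ⟨r, hr, hy⟩
  · exact Or.inl ⟨r, hr.symm⟩
  · exact Or.inr ⟨r, ⟨t, hy.symm⟩, hr⟩

theorem List.suffix_or_eq_append_of_suffix_append {s x y : List α} (h : s <:+ x ++ y) :
    s <:+ y ∨ ∃ r, r <:+ x ∧ s = r ++ y := by
  obtain ⟨t, ht⟩ := h
  rcases List.append_eq_append_iff.1 ht with ⟨r, hx, hs⟩ | ⟨r, _, hy⟩
  · exact Or.inr ⟨r, ⟨t, hx.symm⟩, hs⟩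
  · exact Or.inl ⟨r, hy.symm⟩

def wordPow (u : List α) (n : ℕ) : List α := (List.replicate n u).flatten

theorem wordPow_succ (u : List α) (n : ℕ) : wordPow u (n + 1) = u ++ wordPow u n := by
  simp [wordPow, List.replicate_succ]

theorem wordPow_succ' (u : List α) (n : ℕ) : wordPow u (n + 1) = wordPow u n ++ u := by
  simp [wordPow, List.replicate_succ']

theorem map_wordPow {M : Type*} [Monoid M] {f : List α → M} (h₀ : f [] = 1)
    (hf : ∀ x y, f (x ++ y) = f x * f y) (u : List α) : ∀ n, f (wordPow u n) = f u ^ n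
  | 0 => by simpa [wordPow] using h₀
  | n + 1 => by rw [wordPow_succ', hf, map_wordPow h₀ hf u n, pow_succ]

variable {ω : List α → ℤ}

theorem weight_nil (hω : ∀ x y, ω (x ++ y) = ω x + ω y) : ω [] = 0 := by
  simpa using hω [] []

theorem weight_wordPow (hω : ∀ x y, ω (x ++ y) = ω x + ω y) (u : List α) :
    ∀ n : ℕ, ω (wordPow u n) = n * ω u
  | 0 => by simpa [wordPow] using weight_nil hω
  | n + 1 => by rw [wordPow_succ', hω, weight_wordPow hω u n]; push_cast; ring

theorem prefix_wordPow_nonneg (hω : ∀ x y, ω (x ++ y) = ω x + ω y) {x u : List α}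
    (hu : 0 ≤ ω u) (hxu : ∀ p, p <+: x ++ u → 0 ≤ ω p) :
    ∀ n, ∀ p, p <+: x ++ wordPow u n → 0 ≤ ω p
  | 0, p, hp => hxu p (hp.trans (by simp [wordPow]))
  | n + 1, p, hp => by
    rw [wordPow_succ', ← List.append_assoc] at hp
    rcases List.prefix_or_eq_append_of_prefix_append hp with hp | ⟨q, hq, rfl⟩
    · exact prefix_wordPow_nonneg hω hu hxu n p hp
    · have hxq := hxu (x ++ q) ((List.prefix_append_right_inj x).2 hq)
      have hn : 0 ≤ (n : ℤ) * ω u := by positivity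
      rw [hω] at hxq
      rw [hω, hω, weight_wordPow hω]
      omega

theorem suffix_wordPow_nonpos (hω : ∀ x y, ω (x ++ y) = ω x + ω y) {v y : List α}
    (hv : ω v ≤ 0) (hvy : ∀ s, s <:+ v ++ y → ω s ≤ 0) :
    ∀ n, ∀ s, s <:+ wordPow v n ++ y → ω s ≤ 0
  | 0, s, hs => hvy s (hs.trans (by simp [wordPow]))
  | n + 1, s, hs => by
    rw [wordPow_succ, List.append_assoc] at hs
    rcases List.suffix_or_eq_append_of_suffix_append hs with hs | ⟨r, hr, rfl⟩
    · exact suffix_wordPow_nonpos hω hv hvy n s hs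
    · have hry := hvy (r ++ y) (List.suffix_append_self_iff.2 hr)
      have hn : (n : ℤ) * ω v ≤ 0 := mul_nonpos_of_nonneg_of_nonpos (by positivity) hv
      rw [hω] at hry
      rw [hω, hω, weight_wordPow hω]
      omega

end Words

section Pumping

variable {α : Type*} {ω : List α → ℤ}

theorem natCast_le_weight_wordPow (hω : ∀ x y, ω (x ++ y) = ω x + ω y) {u : List α}
    (hu : 0 < ω u) (n : ℕ) : (n : ℤ) ≤ ω (wordPow u n) := by
  rw [weight_wordPow hω]
  nlinarith

theorem weight_pumped_eq_zero (hω : ∀ x y, ω (x ++ y) = ω x + ω y)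
    {w₁ u w₂ v w₃ : List α} (hw : ω (w₁ ++ u ++ w₂ ++ v ++ w₃) = 0) {a b : ℕ}
    (hab : a * ω u + b * ω v = 0) (k : ℕ) :
    ω (w₁ ++ wordPow u (a * k + 1) ++ w₂ ++ wordPow v (b * k + 1) ++ w₃) = 0 := by
  simp only [hω, weight_wordPow hω] at hw ⊢
  push_cast
  linear_combination hw + k * hab

theorem eventually_pumped_mem_reachLang (hω : ∀ x y, ω (x ++ y) = ω x + ω y)
    {w₁ u w₂ v w₃ : List α} (hu : 0 < ω u) (hpre : ∀ p, p <+: w₁ ++ u → 0 ≤ ω p)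
    (hv : ω v < 0) (hsuf : ∀ s, s <:+ v ++ w₃ → ω s ≤ 0)
    (hw : ω (w₁ ++ u ++ w₂ ++ v ++ w₃) = 0) :
    ∀ᶠ k in atTop, w₁ ++ wordPow u ((-ω v).toNat * k + 1) ++ w₂ ++
      wordPow v ((ω u).toNat * k + 1) ++ w₃ ∈ reachLang ω := by
  classical
  have hab : ((-ω v).toNat : ℤ) * ω u + (ω u).toNat * ω v = 0 := by
    rw [Int.toNat_of_nonneg (by omega), Int.toNat_of_nonneg hu.le]
    ring
  have hmid : ∀ᶠ k : ℕ in atTop, ∀ q ∈ w₂.inits.toFinset, 0 ≤ ω w₁ + k + ω q :=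
    (eventually_all_finset _).2 fun q _ =>
      (eventually_ge_atTop (-ω w₁ - ω q).toNat).mono fun k hk => by omega
  filter_upwards [hmid] with k hk
  have hzero := weight_pumped_eq_zero hω hw hab k
  set U := wordPow u ((-ω v).toNat * k + 1)
  set V := wordPow v ((ω u).toNat * k + 1)
  refine ⟨hzero, fun p hp => ?_⟩
  rw [show w₁ ++ U ++ w₂ ++ V ++ w₃ = (w₁ ++ U) ++ (w₂ ++ (V ++ w₃)) by simp] at hp
  rcases List.prefix_or_eq_append_of_prefix_append hp with hp | ⟨q, hq, rfl⟩
  · exact prefix_wordPow_nonneg hω hu.le hpre _ p hp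
  rcases List.prefix_or_eq_append_of_prefix_append hq with hq | ⟨r, ⟨s, hrs⟩, rfl⟩
  · have hkq := hk q (by simpa using hq)
    have hkU : k ≤ (-ω v).toNat * k + 1 :=
      Nat.le_succ_of_le (Nat.le_mul_of_pos_left k (Int.lt_toNat.2 (by omega)))
    have hU : (((-ω v).toNat * k + 1 : ℕ) : ℤ) ≤ ω U := natCast_le_weight_wordPow hω hu _
    rw [hω, hω]
    omega
  · have hs := suffix_wordPow_nonpos hω hv.le hsuf _ s ⟨r, hrs⟩
    have hrs' := congrArg ω hrs
    simp only [hω] at hzero hrs' ⊢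
    omega

end Pumping

section StableMatrix

variable {K : Type*} [Field K] {n : Type*} [Fintype n] [DecidableEq n]

theorem Matrix.exists_mul_eq_of_range_le {A B : Matrix n n K}
    (h : LinearMap.range B.mulVecLin ≤ LinearMap.range A.mulVecLin) :
    ∃ C : Matrix n n K, A * C = B := by
  choose c hc using fun j => h ⟨Pi.single j 1, rfl⟩
  refine ⟨Matrix.of fun i j => c j i, Matrix.ext fun i j => ?_⟩
  simpa [Matrix.mulVec, Matrix.mul_apply, dotProduct, Pi.single_apply] using congrFun (hc j) i

theorem Matrix.exists_mul_self_mul_eq_of_rank_eq {N : Matrix n n K}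
    (h : N.rank = (N * N).rank) : ∃ C : Matrix n n K, N * N * C = N := by
  apply Matrix.exists_mul_eq_of_range_le
  refine (Submodule.eq_of_le_of_finrank_le ?_ h.le).ge
  rw [Matrix.mulVecLin_mul, LinearMap.range_comp]
  exact LinearMap.map_le_range

end StableMatrix

theorem pow_succ_mul_pow_eq_self {M : Type*} [Monoid M] {N C : M} (h : N * N * C = N) :
    ∀ m : ℕ, N ^ (m + 1) * C ^ m = N
  | 0 => by simp
  | m + 1 => by
    calc N ^ (m + 2) * C ^ (m + 1) = N ^ m * (N * N * C) * C ^ m := by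
          rw [pow_succ, pow_succ, pow_succ' C]; simp only [mul_assoc]
      _ = N := by rw [h, ← pow_succ, pow_succ_mul_pow_eq_self h m]

section ReversibleSeqs

variable (F : Type*) [Field F]

def seqShift : (ℕ → F) →ₐ[F] (ℕ → F) :=
  AlgHom.pi fun k => Pi.evalAlgHom F (fun _ => F) (k + 1)

@[simp] theorem seqShift_apply (f : ℕ → F) (k : ℕ) : seqShift F f k = f (k + 1) := rfl

/-- Equivalently, the sequences satisfying a linear recurrence with nonzero constant
coefficient. -/
def reversibleSeqs : Subalgebra F (ℕ → F) where
  carrier := {f | ∃ V : Submodule F (ℕ → F), FiniteDimensional F V ∧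
      V.map (seqShift F).toLinearMap = V ∧ f ∈ V}
  mul_mem' := by
    rintro f g ⟨V, hV, hVs, hfV⟩ ⟨W, hW, hWs, hgW⟩
    refine ⟨V * W, ?_, by rw [Submodule.map_mul, hVs, hWs], Submodule.mul_mem_mul hfV hgW⟩
    rw [← Submodule.fg_iff_finiteDimensional] at hV hW ⊢
    exact hV.mul hW
  add_mem' := by
    rintro f g ⟨V, hV, hVs, hfV⟩ ⟨W, hW, hWs, hgW⟩
    exact ⟨V ⊔ W, inferInstance, by rw [Submodule.map_sup, hVs, hWs],
      Submodule.add_mem_sup hfV hgW⟩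
  algebraMap_mem' c := by
    refine ⟨F ∙ 1, inferInstance, ?_, ?_⟩
    · rw [Submodule.map_span, Set.image_singleton, AlgHom.toLinearMap_apply, map_one]
    · rw [Algebra.algebraMap_eq_smul_one]
      exact Submodule.smul_mem _ _ (Submodule.mem_span_singleton_self _)

variable {F}

theorem eq_zero_of_mem_reversibleSeqs_of_eventually {f : ℕ → F} (hf : f ∈ reversibleSeqs F)
    (h : ∀ᶠ k in atTop, f k = 0) : f = 0 := by
  obtain ⟨V, hV, hVs, hfV⟩ := hf
  obtain ⟨K, hK⟩ := eventually_atTop.1 h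
  have hmaps : Set.MapsTo (seqShift F) V V := fun g hg => hVs ▸ ⟨g, hg, rfl⟩
  let T : V →ₗ[F] V := (seqShift F).toLinearMap.restrict hmaps
  have hT : Function.Injective T := LinearMap.injective_iff_surjective.2 fun ⟨g, hg⟩ => by
    obtain ⟨g', hg', rfl⟩ := hVs.symm ▸ hg
    exact ⟨⟨g', hg'⟩, rfl⟩
  suffices ∀ K, ∀ g ∈ V, (∀ k ≥ K, g k = 0) → g = 0 from this K f hfV hK
  intro K
  induction K with
  | zero => exact fun g _ hg => funext fun k => hg k k.zero_le
  | succ K ih =>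
    intro g hg hgK
    have hTg : T ⟨g, hg⟩ = 0 :=
      Subtype.ext (ih _ (hmaps hg) fun k hk => hgK (k + 1) (by omega))
    simpa using congrArg Subtype.val (hT (hTg.trans (map_zero T).symm))

theorem pow_entry_mem_reversibleSeqs {n : Type*} [Fintype n] [DecidableEq n]
    {N C : Matrix n n F} (hC : N * N * C = N) (a : ℕ) (i j : n) :
    (fun k => (N ^ (a * k + 1)) i j) ∈ reversibleSeqs F := by
  let Θ : Matrix n n F →ₗ[F] (ℕ → F) :=
    LinearMap.pi fun k => Matrix.entryLinearMap F F i j ∘ₗ LinearMap.mulLeft F (N ^ (a * k + 1))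
  have hΘ (Q : Matrix n n F) (k : ℕ) : Θ Q k = (N ^ (a * k + 1) * Q) i j := rfl
  have hshift (Q : Matrix n n F) : seqShift F (Θ Q) = Θ (N ^ a * Q) := by
    funext k
    rw [seqShift_apply, hΘ, hΘ, ← mul_assoc, ← pow_add, mul_add, mul_one, add_right_comm]
  refine ⟨LinearMap.range Θ, inferInstance, le_antisymm ?_ ?_, ⟨1, funext fun k => ?_⟩⟩
  · rintro _ ⟨_, ⟨Q, rfl⟩, rfl⟩
    exact ⟨N ^ a * Q, (hshift Q).symm⟩
  · rintro _ ⟨Q, rfl⟩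
    refine ⟨Θ (C ^ a * Q), ⟨_, rfl⟩, ?_⟩
    rw [AlgHom.toLinearMap_apply, hshift]
    funext k
    calc Θ (N ^ a * (C ^ a * Q)) k = (N ^ (a * k) * (N ^ (a + 1) * C ^ a) * Q) i j := by
          simp only [hΘ, ← mul_assoc, ← pow_add, add_right_comm, add_assoc]
      _ = Θ Q k := by rw [pow_succ_mul_pow_eq_self hC, ← pow_succ, hΘ]
  · rw [hΘ, mul_one]

end ReversibleSeqs

section EntrywiseSubalgebra

variable {ι R A : Type*} [CommSemiring R] [CommSemiring A] [Algebra R A]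
  (S : Subalgebra R (ι → A))

theorem Subalgebra.aeval_pointwise_mem {σ : Type*} {x : σ → ι → A} (hx : ∀ s, x s ∈ S)
    (p : MvPolynomial σ R) : (fun k => MvPolynomial.aeval (fun s => x s k) p) ∈ S := by
  have hfun : (fun k => MvPolynomial.aeval (fun s => x s k) p) = MvPolynomial.aeval x p := by
    funext k
    change _ = Pi.evalAlgHom R (fun _ => A) k (MvPolynomial.aeval x p)
    rw [MvPolynomial.comp_aeval_apply]
    rfl
  rw [hfun]
  refine Algebra.adjoin_le (Set.range_subset_iff.2 hx) ?_
  rw [Algebra.adjoin_range_eq_range_aeval]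
  exact ⟨p, rfl⟩

theorem Subalgebra.matrix_mul_apply_mem {n : Type*} [Fintype n] {M N : ι → Matrix n n A}
    (hM : ∀ i j, (fun k => M k i j) ∈ S) (hN : ∀ i j, (fun k => N k i j) ∈ S) (i j : n) :
    (fun k => (M k * N k) i j) ∈ S := by
  have hfun : (fun k => (M k * N k) i j) = ∑ l, (fun k => M k i l) * (fun k => N k l j) := by
    funext k
    simp [Matrix.mul_apply]
  rw [hfun]
  exact sum_mem fun l _ => S.mul_mem (hM i l) (hN l j)

end EntrywiseSubalgebra

theorem eval_eq_zero_of_eventually_pumped {F : Type*} [Field F] {n : Type*} [Fintype n]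
    [DecidableEq n] {A₁ U A₂ V A₃ : Matrix n n F} (hU : ∃ C, U * U * C = U)
    (hV : ∃ C, V * V * C = V) (a b : ℕ) {p : MvPolynomial (n × n) F}
    (h : ∀ᶠ k in atTop, MvPolynomial.eval
      (fun ij => (A₁ * U ^ (a * k + 1) * A₂ * V ^ (b * k + 1) * A₃) ij.1 ij.2) p = 0) :
    MvPolynomial.eval (fun ij => (A₁ * U * A₂ * V * A₃) ij.1 ij.2) p = 0 := by
  obtain ⟨C, hC⟩ := hU
  obtain ⟨D, hD⟩ := hV
  let S := reversibleSeqs F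
  have hconst (A : Matrix n n F) (i j : n) : (fun _ : ℕ => A i j) ∈ S := S.algebraMap_mem (A i j)
  have hentries : ∀ ij : n × n,
      (fun k => (A₁ * U ^ (a * k + 1) * A₂ * V ^ (b * k + 1) * A₃) ij.1 ij.2) ∈ S := fun ij =>
    S.matrix_mul_apply_mem (S.matrix_mul_apply_mem (S.matrix_mul_apply_mem
      (S.matrix_mul_apply_mem (hconst A₁) (pow_entry_mem_reversibleSeqs hC a)) (hconst A₂))
      (pow_entry_mem_reversibleSeqs hD b)) (hconst A₃) ij.1 ij.2
  have hzero := eq_zero_of_mem_reversibleSeqs_of_eventually (S.aeval_pointwise_mem hentries p) h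
  simpa using congrFun hzero 0

section ZariskiClosure

variable {d : ℕ}

theorem subset_matZClosure (S : Set (Matrix (Fin d) (Fin d) Qbar)) : S ⊆ matZClosure d S :=
  fun _ hA _ hp => hp _ hA

theorem matZClosure_mono {S T : Set (Matrix (Fin d) (Fin d) Qbar)} (h : S ⊆ T) :
    matZClosure d S ⊆ matZClosure d T :=
  fun _ hA p hp => hA p fun B hB => hp B (h hB)

theorem matZClosure_subset_of_subset {S T : Set (Matrix (Fin d) (Fin d) Qbar)}
    (h : T ⊆ matZClosure d S) : matZClosure d T ⊆ matZClosure d S :=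
  fun _ hA p hp => hA p fun _ hB => h hB p hp

theorem mem_matZClosure_of_eventually_pumped {S : Set (Matrix (Fin d) (Fin d) Qbar)}
    {A₁ U A₂ V A₃ : Matrix (Fin d) (Fin d) Qbar} (hU : ∃ C, U * U * C = U)
    (hV : ∃ C, V * V * C = V) (a b : ℕ)
    (h : ∀ᶠ k in atTop, A₁ * U ^ (a * k + 1) * A₂ * V ^ (b * k + 1) * A₃ ∈ S) :
    A₁ * U * A₂ * V * A₃ ∈ matZClosure d S :=
  fun _ hp => eval_eq_zero_of_eventually_pumped hU hV a b (h.mono fun _ hk => hp _ hk)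

end ZariskiClosure

section LiftMat

variable {d : ℕ}

theorem liftMat_mul (M N : Matrix (Fin d) (Fin d) ℚ) : liftMat (M * N) = liftMat M * liftMat N :=
  map_mul (algebraMap ℚ Qbar).mapMatrix M N

theorem liftMat_pow (M : Matrix (Fin d) (Fin d) ℚ) (k : ℕ) : liftMat (M ^ k) = liftMat M ^ k :=
  map_pow (algebraMap ℚ Qbar).mapMatrix M k

theorem MatStable.exists_liftMat_mul_self_mul_eq {M : Matrix (Fin d) (Fin d) ℚ}
    (hM : MatStable M) : ∃ C, liftMat M * liftMat M * C = liftMat M := by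
  obtain ⟨C, hC⟩ := Matrix.exists_mul_self_mul_eq_of_rank_eq hM
  exact ⟨liftMat C, by rw [← liftMat_mul, ← liftMat_mul, hC]⟩

end LiftMat

theorem reach_closure_of_approximation_general {α : Type*} (d : ℕ)
    (φ : List α → Matrix (Fin d) (Fin d) ℚ)
    (hφ_nil : φ [] = 1) (hφ_app : ∀ u v : List α, φ (u ++ v) = φ u * φ v)
    (ω : List α → ℤ)
    (hω_app : ∀ u v : List α, ω (u ++ v) = ω u + ω v)
    (L' : Set (List α))
    (hLZ : L' ⊆ zeroLang ω)
    (hsub : reachLang ω ⊆ L')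
    (hfac : ∀ w ∈ L' \ reachLang ω,
        ∃ w₁ u w₂ v w₃ : List α, w = w₁ ++ u ++ w₂ ++ v ++ w₃ ∧
          (MatStable (φ u) ∧ 0 < ω u ∧ ∀ p : List α, p <+: (w₁ ++ u) → 0 ≤ ω p) ∧
          (MatStable (φ v) ∧ ω v < 0 ∧ ∀ s : List α, s <:+ (v ++ w₃) → ω s ≤ 0)) :
    matZClosure d ((fun w => liftMat (φ w)) '' reachLang ω) =
      matZClosure d ((fun w => liftMat (φ w)) '' L') := by
  refine (matZClosure_mono (Set.image_mono hsub)).antisymm (matZClosure_subset_of_subset ?_)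
  rintro _ ⟨w, hw, rfl⟩
  by_cases hR : w ∈ reachLang ω
  · exact subset_matZClosure _ ⟨w, hR, rfl⟩
  obtain ⟨w₁, u, w₂, v, w₃, rfl, ⟨hUs, hu, hpre⟩, hVs, hv, hsuf⟩ := hfac w ⟨hw, hR⟩
  have hpump := eventually_pumped_mem_reachLang hω_app hu hpre hv hsuf (hLZ hw)
  simp only [hφ_app, liftMat_mul]
  refine mem_matZClosure_of_eventually_pumped hUs.exists_liftMat_mul_self_mul_eq
    hVs.exists_liftMat_mul_self_mul_eq (-ω v).toNat (ω u).toNat (hpump.mono fun k hk => ⟨_, hk, ?_⟩)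
  simp only [hφ_app, map_wordPow hφ_nil hφ_app, liftMat_mul, liftMat_pow]

/-- Let `L' ⊆ L_Z(ω)` be any language with `L_R(ω) ⊆ L'` such that every word
`w ∈ L' \ L_R(ω)` factors as `w = w₁ u w₂ v w₃` where `φ(u)` is stable, `ω(u) > 0`,
every prefix of `w₁u` has nonnegative weight, `φ(v)` is stable, `ω(v) < 0`, and every
suffix of `v w₃` has nonpositive weight.  Then `φ(L_R(ω))` and `φ(L')` have the same
Zariski closure in `M_d(ℚ̄)`. -/
theorem reach_closure_of_approximation {α : Type*} [Fintype α] (d : ℕ)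
    (φ : List α → Matrix (Fin d) (Fin d) ℚ)
    (hφ_nil : φ [] = 1) (hφ_app : ∀ u v : List α, φ (u ++ v) = φ u * φ v)
    (ω : List α → ℤ)
    (hω_nil : ω [] = 0) (hω_app : ∀ u v : List α, ω (u ++ v) = ω u + ω v)
    (hω_letter : ∀ σ : α, ω [σ] = -1 ∨ ω [σ] = 0 ∨ ω [σ] = 1)
    (L' : Set (List α))
    (hLZ : L' ⊆ zeroLang ω)
    (hsub : reachLang ω ⊆ L')
    (hfac : ∀ w ∈ L' \ reachLang ω,
        ∃ w₁ u w₂ v w₃ : List α, w = w₁ ++ u ++ w₂ ++ v ++ w₃ ∧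
          (MatStable (φ u) ∧ 0 < ω u ∧ ∀ p : List α, p <+: (w₁ ++ u) → 0 ≤ ω p) ∧
          (MatStable (φ v) ∧ ω v < 0 ∧ ∀ s : List α, s <:+ (v ++ w₃) → ω s ≤ 0)) :
    matZClosure d ((fun w => liftMat (φ w)) '' reachLang ω) =
      matZClosure d ((fun w => liftMat (φ w)) '' L') :=
  reach_closure_of_approximation_general d φ hφ_nil hφ_app ω hω_app L' hLZ hsub hfac
end
end
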